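/- If x is an aperiodic Sturmian word (i.e., an aperiodic, uniformly recurrent, balanced binary word), then the abelian closure of x equals the shift orbit closure of x. -/

import Mathlib

/-- `u` is a factor of the infinite word `x`. -/
def Factor {A : Type*} (x : ℕ → A) (u : List A) : Prop :=
  ∃ i, u = (List.range u.length).map fun k => x (i + k)

/-- Abelian equivalence of finite words. -/
def AbEq {A : Type*} [DecidableEq A] (u v : List A) : Prop :=
  ∀ a, u.count a = v.count a

/-- `y` is in the abelian closure of `x`. -/
def InAbClosure {A : Type*} [DecidableEq A] (x y : ℕ → A) : Prop :=
  ∀ u, Factor y u → ∃ v, Factor x v ∧ AbEq u v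

/-- A binary word is balanced. -/
def BalancedWord (x : ℕ → Fin 2) : Prop :=
  ∀ u v, Factor x u → Factor x v → u.length = v.length →
    |(u.count 1 : ℤ) - (v.count 1 : ℤ)| ≤ 1

/-- An infinite word is uniformly recurrent. -/
def UniformlyRecurrent {A : Type*} (x : ℕ → A) : Prop :=
  ∀ u, Factor x u → ∃ N, ∀ v, Factor x v → v.length = N → u <:+: v

/-- An infinite word is eventually periodic. -/
def EventuallyPeriodic {A : Type*} (y : ℕ → A) : Prop :=
  ∃ N p : ℕ, 0 < p ∧ ∀ i, N ≤ i → y (i + p) = y i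

/-!
Balance makes the least number of ones in a window of length `n` additive up to an error of one,
which yields a slope `α` with `|w.count 1 - w.length * α| ≤ 1` for every factor `w` of `x`. If some
`q * α` were an integer, `x` would be eventually periodic, so the bound is strict. It depends only
on the Parikh vector of `w`, hence it holds for every factor of a word in the abelian closure.
A word all of whose factors satisfy the strict bound is determined by the number of its prefixes
lying above the line of slope `α`, so at most `n + 1` such words have length `n`; an aperiodic word
already has `n + 1` factors of length `n`, so each of them is a factor of `x`.
-/

def window {A : Type*} (x : ℕ → A) (i n : ℕ) : List A := (List.range n).map fun k => x (i + k)

section Windows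

variable {A : Type*} (x : ℕ → A)

@[simp] lemma length_window (i n : ℕ) : (window x i n).length = n := by
  simp [window]

lemma factor_window (i n : ℕ) : Factor x (window x i n) := ⟨i, by simp [window]⟩

lemma window_add (i a b : ℕ) : window x i (a + b) = window x i a ++ window x (i + a) b := by
  simp only [window, List.range_add, List.map_append, List.map_map, Function.comp_def,
    Nat.add_assoc]

lemma window_succ (i n : ℕ) : window x i (n + 1) = x i :: window x (i + 1) n := by
  rw [Nat.add_comm n, window_add]
  rfl

lemma take_window {i n a : ℕ} (h : a ≤ n) : (window x i n).take a = window x i a := by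
  rw [show n = a + (n - a) by omega, window_add, List.take_left' (length_window x i a)]

lemma drop_window {i n a : ℕ} (h : a ≤ n) :
    (window x i n).drop a = window x (i + a) (n - a) := by
  rw [show n = a + (n - a) by omega, window_add, List.drop_left' (length_window x i a)]
  simp

variable {x}

lemma Factor.of_infix {u v : List A} (hu : Factor x u) (hvu : v <:+: u) : Factor x v := by
  obtain ⟨s, t, rfl⟩ := hvu
  obtain ⟨i, hi⟩ := hu
  change _ = window x i _ at hi
  refine ⟨i + s.length, ?_⟩
  have := congrArg (fun w => (w.drop s.length).take v.length) hi
  simp only [List.append_assoc, List.drop_left, List.take_left] at this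
  rwa [drop_window x (by simp), take_window x (by simp)] at this

end Windows

def factorSet {A : Type*} (x : ℕ → A) (n : ℕ) : Set (List A) := Set.range fun i => window x i n

section MorseHedlund

variable {A : Type*} {x : ℕ → A}

lemma factor_iff_mem_factorSet {u : List A} : Factor x u ↔ u ∈ factorSet x u.length :=
  ⟨fun ⟨i, h⟩ => ⟨i, h.symm⟩, fun ⟨i, h⟩ => ⟨i, h.symm⟩⟩

lemma factorSet_finite [Finite A] (n : ℕ) : (factorSet x n).Finite :=
  (List.finite_length_eq A n).subset (by rintro _ ⟨i, rfl⟩; simp)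

lemma image_take_factorSet (n : ℕ) : (·.take n) '' factorSet x (n + 1) = factorSet x n := by
  ext u
  constructor
  · rintro ⟨_, ⟨i, rfl⟩, rfl⟩
    exact ⟨i, (take_window x (by omega)).symm⟩
  · rintro ⟨i, rfl⟩
    exact ⟨_, ⟨i, rfl⟩, take_window x (by omega)⟩

lemma eventuallyPeriodic_of_forall_add_eq {i j : ℕ} (hij : i < j)
    (h : ∀ t, x (i + t) = x (j + t)) : EventuallyPeriodic x := by
  refine ⟨i, j - i, by omega, fun k hk => ?_⟩
  obtain ⟨t, rfl⟩ := Nat.exists_eq_add_of_le hk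
  rw [show i + t + (j - i) = j + t by omega, h]

/-- Every factor of length `n` has a unique right extension, so two equal windows of length `n`,
found by pigeonhole, stay equal when shifted. -/
lemma eventuallyPeriodic_of_injOn_take [Finite A] {n : ℕ}
    (hinj : Set.InjOn (·.take n) (factorSet x (n + 1))) : EventuallyPeriodic x := by
  obtain ⟨i, -, j, -, hij, heq⟩ := Set.infinite_univ.exists_lt_map_eq_of_mapsTo
    (f := fun i => window x i n) (t := factorSet x n) (fun i _ => ⟨i, rfl⟩) (factorSet_finite n)
  have hext : ∀ a b, window x a n = window x b n → window x a (n + 1) = window x b (n + 1) :=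
    fun a b h => hinj ⟨a, rfl⟩ ⟨b, rfl⟩ (by simp only [take_window x (Nat.le_succ n), h])
  have hshift : ∀ t, window x (i + t) (n + 1) = window x (j + t) (n + 1) := by
    intro t
    induction t with
    | zero => exact hext i j heq
    | succ t ih =>
      apply hext
      have := congrArg (·.drop 1) ih
      simpa only [drop_window x (Nat.le_add_left 1 n), Nat.add_sub_cancel, Nat.add_assoc]
        using this
  refine eventuallyPeriodic_of_forall_add_eq hij fun t => ?_
  have := hshift t
  rw [window_succ, window_succ, List.cons.injEq] at this
  exact this.1

theorem succ_le_ncard_factorSet [Finite A] (hap : ¬ EventuallyPeriodic x) (n : ℕ) :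
    n + 1 ≤ (factorSet x n).ncard := by
  induction n with
  | zero => exact (Set.ncard_pos (factorSet_finite 0)).mpr ⟨_, 0, rfl⟩
  | succ n ih =>
    have hle : (factorSet x n).ncard ≤ (factorSet x (n + 1)).ncard := by
      rw [← image_take_factorSet]
      exact Set.ncard_image_le (factorSet_finite _)
    rcases hle.lt_or_eq with hlt | heq
    · omega
    · rw [← image_take_factorSet] at heq
      exact absurd (eventuallyPeriodic_of_injOn_take
        (Set.injOn_of_ncard_image_eq heq (factorSet_finite _))) hap

end MorseHedlund

/-- `α` is the supremum of `f n / n`; comparing `f (n * N)` with both `f n` and `f N` gives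
`n * α ≤ f n + 1`. -/
theorem exists_slope_of_superadditive {f : ℕ → ℕ} (hsup : ∀ a b, f a + f b ≤ f (a + b))
    (hsub : ∀ a b, f (a + b) ≤ f a + f b + 1) :
    ∃ α : ℝ, ∀ n, (f n : ℝ) ≤ n * α ∧ n * α ≤ f n + 1 := by
  have hmul_le : ∀ k n, k * f n ≤ f (k * n) := by
    intro k n
    induction k with
    | zero => simp
    | succ k ih =>
      rw [Nat.succ_mul, Nat.succ_mul]
      exact (Nat.add_le_add_right ih _).trans (hsup _ _)
  have hle_mul : ∀ k n, f (k * n) ≤ k * f n + k := by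
    intro k n
    induction k with
    | zero => simpa using hsup 0 0
    | succ k ih => rw [Nat.succ_mul, Nat.succ_mul]; linarith [hsub (k * n) n]
  have hcross : ∀ n N, n * f N ≤ N * f n + N := fun n N =>
    (hmul_le n N).trans (Nat.mul_comm n N ▸ hle_mul N n)
  have hbdd : BddAbove (Set.range fun N : ℕ => (f (N + 1) : ℝ) / (N + 1)) := by
    refine ⟨f 1 + 1, ?_⟩
    rintro _ ⟨N, rfl⟩
    rw [div_le_iff₀ (by positivity)]
    have := hcross 1 (N + 1)
    have : (f (N + 1) : ℝ) ≤ (N + 1) * f 1 + (N + 1) := by exact_mod_cast (by simpa using this)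
    linarith
  refine ⟨⨆ N : ℕ, (f (N + 1) : ℝ) / (N + 1), fun n => ?_⟩
  rcases n with _ | n
  · have : f 0 = 0 := by simpa using hsup 0 0
    simp [this]
  constructor
  · have := le_ciSup hbdd n
    rw [div_le_iff₀ (by positivity)] at this
    push_cast
    linarith
  · rw [mul_comm, ← le_div_iff₀ (by positivity)]
    refine ciSup_le fun N => ?_
    rw [div_le_div_iff₀ (by positivity) (by positivity)]
    have : ((n + 1) * f (N + 1) : ℝ) ≤ (N + 1) * f (n + 1) + (N + 1) := by
      exact_mod_cast hcross (n + 1) (N + 1)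
    push_cast
    linarith

def discrepancy (α : ℝ) (w : List (Fin 2)) : ℝ := w.count 1 - w.length * α

@[simp] lemma discrepancy_append (α : ℝ) (u v : List (Fin 2)) :
    discrepancy α (u ++ v) = discrepancy α u + discrepancy α v := by
  simp only [discrepancy, List.count_append, List.length_append]
  push_cast
  ring

lemma discrepancy_perm (α : ℝ) {u v : List (Fin 2)} (h : u.Perm v) :
    discrepancy α u = discrepancy α v := by
  rw [discrepancy, discrepancy, h.count_eq, h.length_eq]

lemma Fin.eq_of_count_one_singleton {a b : Fin 2} (h : [a].count 1 = [b].count 1) : a = b := by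
  revert a b
  decide

lemma discrepancy_take_add_one_le {α : ℝ} {u v : List (Fin 2)} {k : ℕ} (hk : k ≤ u.length)
    (hl : u.length = v.length) (h : discrepancy α (u.take k) < discrepancy α (v.take k)) :
    discrepancy α (u.take k) + 1 ≤ discrepancy α (v.take k) := by
  simp only [discrepancy, List.length_take, min_eq_left hk, min_eq_left (hl ▸ hk)] at h ⊢
  have : ((u.take k).count 1 : ℝ) < (v.take k).count 1 := by linarith
  have : ((u.take k).count 1 : ℝ) + 1 ≤ (v.take k).count 1 := by exact_mod_cast this
  linarith

lemma eq_of_discrepancy_take_eq (α : ℝ) {u v : List (Fin 2)} (hl : u.length = v.length)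
    (h : ∀ k ≤ u.length, discrepancy α (u.take k) = discrepancy α (v.take k)) : u = v := by
  refine List.ext_getElem hl fun k hku hkv => Fin.eq_of_count_one_singleton ?_
  have hsucc : ∀ (w : List (Fin 2)) (hk : k < w.length),
      discrepancy α (w.take (k + 1)) = discrepancy α (w.take k) + discrepancy α [w[k]] := by
    intro w hk
    rw [List.take_add_one, List.getElem?_eq_getElem hk, Option.toList_some, discrepancy_append]
  have := h (k + 1) hku
  rw [hsucc u hku, hsucc v hkv, h k hku.le, add_right_inj] at this
  simpa [discrepancy] using this

noncomputable def minOnes (x : ℕ → Fin 2) (n : ℕ) : ℕ :=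
  sInf (Set.range fun i => (window x i n).count 1)

section Slope

variable {x : ℕ → Fin 2}

lemma count_window_add (i a b : ℕ) :
    (window x i (a + b)).count 1 = (window x i a).count 1 + (window x (i + a) b).count 1 := by
  rw [window_add, List.count_append]

lemma minOnes_le (i n : ℕ) : minOnes x n ≤ (window x i n).count 1 := Nat.sInf_le ⟨i, rfl⟩

lemma exists_count_window_eq_minOnes (n : ℕ) : ∃ i, (window x i n).count 1 = minOnes x n :=
  Nat.sInf_mem (Set.range_nonempty _)

lemma count_window_le_minOnes_add_one (hbal : BalancedWord x) (i n : ℕ) :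
    (window x i n).count 1 ≤ minOnes x n + 1 := by
  obtain ⟨j, hj⟩ := exists_count_window_eq_minOnes (x := x) n
  have := (abs_le.mp (hbal _ _ (factor_window x i n) (factor_window x j n) (by simp))).2
  omega

lemma minOnes_add_minOnes_le (a b : ℕ) : minOnes x a + minOnes x b ≤ minOnes x (a + b) := by
  obtain ⟨i, hi⟩ := exists_count_window_eq_minOnes (x := x) (a + b)
  rw [← hi, count_window_add]
  exact Nat.add_le_add (minOnes_le i a) (minOnes_le (i + a) b)

lemma minOnes_add_le (hbal : BalancedWord x) (a b : ℕ) :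
    minOnes x (a + b) ≤ minOnes x a + minOnes x b + 1 := by
  obtain ⟨i, hi⟩ := exists_count_window_eq_minOnes (x := x) a
  have := count_window_le_minOnes_add_one hbal (i + a) b
  have := minOnes_le (x := x) i (a + b)
  rw [count_window_add] at this
  omega

theorem exists_slope (hbal : BalancedWord x) :
    ∃ α : ℝ, ∀ i n, |discrepancy α (window x i n)| ≤ 1 := by
  obtain ⟨α, hα⟩ :=
    exists_slope_of_superadditive minOnes_add_minOnes_le (minOnes_add_le hbal)
  refine ⟨α, fun i n => abs_le.mpr ?_⟩
  have hlo : (minOnes x n : ℝ) ≤ (window x i n).count 1 := by exact_mod_cast minOnes_le i n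
  have hhi : ((window x i n).count 1 : ℝ) ≤ minOnes x n + 1 := by
    exact_mod_cast count_window_le_minOnes_add_one hbal i n
  simp only [discrepancy, length_window]
  constructor <;> linarith [hα n]

end Slope

lemma Nat.finite_of_forall_not_modEq {s : Set ℕ} {q : ℕ} (hq : 0 < q)
    (h : ∀ i ∈ s, ∀ j ∈ s, i < j → ¬ i ≡ j [MOD q]) : s.Finite := by
  refine Set.Finite.of_finite_image ((Set.finite_Iio q).subset ?_) (f := (· % q)) ?_
  · rintro _ ⟨i, -, rfl⟩
    exact Nat.mod_lt i hq
  · intro i hi j hj hij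
    rcases lt_trichotomy i j with hlt | heq | hgt
    · exact absurd hij (h i hi j hj hlt)
    · exact heq
    · exact absurd hij.symm (h j hj i hi hgt)

/-- Balance makes the nonzero values of `E` share a sign, so two of them in one progression of
step `q` would push a partial sum to `2`. -/
lemma eq_zero_or_eq_zero_of_modEq {E : ℕ → ℤ} {q : ℕ}
    (hsum : ∀ i m, |∑ t ∈ Finset.range m, E (i + t * q)| ≤ 1) (hE : ∀ j k, |E j - E k| ≤ 1)
    {i j : ℕ} (hij : i < j) (hmod : i ≡ j [MOD q]) : E i = 0 ∨ E j = 0 := by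
  by_contra! ⟨hi, hj⟩
  have hunit : E i = 1 ∨ E i = -1 := by
    have := abs_le.mp (by simpa using hsum i 1)
    omega
  have hsign : ∀ k, 0 ≤ E i * E k := by
    intro k
    have := abs_le.mp (hE i k)
    rcases hunit with h | h <;> rw [h] <;> omega
  obtain ⟨k, hk⟩ := (Nat.modEq_iff_dvd' hij.le).mp hmod
  have hjk : j = i + k * q := by rw [Nat.mul_comm] at hk; omega
  have hk0 : k ≠ 0 := by rintro rfl; omega
  have hlow : E i * E i + E i * E j ≤ E i * ∑ t ∈ Finset.range (k + 1), E (i + t * q) := by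
    rw [Finset.mul_sum]
    calc E i * E i + E i * E j = ∑ t ∈ {0, k}, E i * E (i + t * q) := by
          rw [Finset.sum_pair (Ne.symm hk0), hjk]; simp
      _ ≤ _ := Finset.sum_le_sum_of_subset_of_nonneg (by intro t; simp; omega)
          fun t _ _ => hsign _
  have hj' := hsign j
  have hS := abs_le.mp (hsum i (k + 1))
  have : E i * E j ≠ 0 := mul_ne_zero hi hj
  rcases hunit with h | h <;> rw [h] at hlow hj' this <;> omega

section RationalSlope

variable {x : ℕ → Fin 2}

lemma eventuallyPeriodic_of_count_window_eq {N q : ℕ} (hq : 0 < q)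
    (h : ∀ i, N ≤ i → (window x (i + 1) q).count 1 = (window x i q).count 1) :
    EventuallyPeriodic x := by
  refine ⟨N, q, hq, fun i hi => ?_⟩
  have h1 := count_window_add (x := x) i 1 q
  have h2 := count_window_add (x := x) i q 1
  rw [Nat.add_comm 1 q] at h1
  have hsingle : (window x (i + q) 1).count 1 = (window x i 1).count 1 := by
    have := h i hi
    omega
  exact Fin.eq_of_count_one_singleton (by simpa [window] using hsingle)

lemma count_window_mul (i m q : ℕ) :
    (window x i (m * q)).count 1 = ∑ t ∈ Finset.range m, (window x (i + t * q) q).count 1 := by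
  induction m with
  | zero => simp [window]
  | succ m ih => rw [Nat.succ_mul, count_window_add, ih, Finset.sum_range_succ]

/-- The excess `E j` of ones over `p` in the window of length `q` at `j` is an integer, and its
sums along progressions of step `q` are discrepancies of windows of length `m * q`. -/
theorem eventuallyPeriodic_of_rational_slope (hbal : BalancedWord x) {α : ℝ}
    (hα : ∀ i n, |discrepancy α (window x i n)| ≤ 1) {q : ℕ} (hq : 0 < q) {p : ℤ}
    (hqp : (q : ℝ) * α = p) : EventuallyPeriodic x := by
  set E : ℕ → ℤ := fun j => (window x j q).count 1 - p with hE
  have hsum : ∀ i m, |∑ t ∈ Finset.range m, E (i + t * q)| ≤ 1 := by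
    intro i m
    have h := hα i (m * q)
    rw [discrepancy, count_window_mul, length_window, Nat.cast_mul, mul_assoc, hqp] at h
    have : ((∑ t ∈ Finset.range m, E (i + t * q) : ℤ) : ℝ)
        = ((∑ t ∈ Finset.range m, (window x (i + t * q) q).count 1 : ℕ) : ℝ) - m * p := by
      simp [hE, Finset.sum_sub_distrib]
    exact_mod_cast this ▸ h
  have hbalE : ∀ j k, |E j - E k| ≤ 1 := fun j k => by
    simpa [hE] using hbal _ _ (factor_window x j q) (factor_window x k q) (by simp)
  obtain ⟨N, hN⟩ := (Nat.finite_of_forall_not_modEq hq (s := {j | E j ≠ 0})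
    fun i hi j hj hij hmod => (eq_zero_or_eq_zero_of_modEq hsum hbalE hij hmod).elim hi hj).bddAbove
  refine eventuallyPeriodic_of_count_window_eq (N := N + 1) hq fun i hi => ?_
  have hzero : ∀ j, N < j → E j = 0 := fun j hj => by
    by_contra h
    exact absurd (hN h) (by omega)
  have h0 := hzero i (by omega)
  have h1 := hzero (i + 1) (by omega)
  simp only [hE] at h0 h1
  omega

theorem abs_discrepancy_lt_one (hbal : BalancedWord x) {α : ℝ}
    (hα : ∀ i n, |discrepancy α (window x i n)| ≤ 1) (hap : ¬ EventuallyPeriodic x)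
    {v : List (Fin 2)} (hv : Factor x v) : |discrepancy α v| < 1 := by
  obtain ⟨i, hi⟩ := hv
  change v = window x i v.length at hi
  rw [hi]
  refine (hα i _).lt_of_ne fun h => hap ?_
  have hn : 0 < v.length := by
    refine Nat.pos_of_ne_zero fun h0 => ?_
    simp [h0, discrepancy, window] at h
  simp only [discrepancy, length_window] at h
  rcases abs_eq (zero_le_one' ℝ) |>.mp h with h | h
  · exact eventuallyPeriodic_of_rational_slope hbal hα hn (p := (window x i v.length).count 1 - 1)
      (by push_cast; linarith)
  · exact eventuallyPeriodic_of_rational_slope hbal hα hn (p := (window x i v.length).count 1 + 1)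
      (by push_cast; linarith)

end RationalSlope

def IsCorridor (α : ℝ) (w : List (Fin 2)) : Prop := ∀ v, v <:+: w → |discrepancy α v| < 1

lemma isCorridor_of_factor {y : ℕ → Fin 2} {α : ℝ} (hy : ∀ v, Factor y v → |discrepancy α v| < 1)
    {u : List (Fin 2)} (hu : Factor y u) : IsCorridor α u :=
  fun _ hvu => hy _ (Factor.of_infix hu hvu)

noncomputable def aboveSet (α : ℝ) (w : List (Fin 2)) : Finset ℕ :=
  (Finset.Icc 1 w.length).filter fun k => 0 < discrepancy α (w.take k)

namespace IsCorridor

variable {α : ℝ} {u v w : List (Fin 2)}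

lemma abs_discrepancy_take (hw : IsCorridor α w) (k : ℕ) : |discrepancy α (w.take k)| < 1 :=
  hw _ (List.take_prefix k w).isInfix

lemma discrepancy_take_sub_lt (hw : IsCorridor α w) (k k' : ℕ) :
    discrepancy α (w.take k) - discrepancy α (w.take k') < 1 := by
  have hsplit : ∀ a b, a ≤ b →
      discrepancy α (w.take b) = discrepancy α (w.take a) + discrepancy α ((w.take b).drop a) := by
    intro a b hab
    conv_lhs => rw [← List.take_append_drop a (w.take b)]
    rw [List.take_take, min_eq_left hab, discrepancy_append]
  have hmid : ∀ a b, |discrepancy α ((w.take b).drop a)| < 1 := fun a b =>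
    hw _ ((List.drop_suffix a _).isInfix.trans (List.take_prefix b w).isInfix)
  rcases le_total k k' with h | h
  · linarith [hsplit k k' h, (abs_lt.mp (hmid k k')).1]
  · linarith [hsplit k' k h, (abs_lt.mp (hmid k' k)).2]

/-- An index above the line for `u` only and another above it for `v` only would make the prefix
discrepancies of `u` and `v` cross by `2` between them. -/
lemma aboveSet_total (hu : IsCorridor α u) (hv : IsCorridor α v) (hl : u.length = v.length) :
    aboveSet α u ⊆ aboveSet α v ∨ aboveSet α v ⊆ aboveSet α u := by
  by_contra hcon
  rw [not_or] at hcon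
  obtain ⟨k, hku, hkv⟩ := Finset.not_subset.mp hcon.1
  obtain ⟨k', hk'v, hk'u⟩ := Finset.not_subset.mp hcon.2
  simp only [aboveSet, Finset.mem_filter, Finset.mem_Icc, not_and, not_lt] at hku hkv hk'v hk'u
  have h1 := discrepancy_take_add_one_le (by omega) hl.symm
    ((hkv (hl ▸ hku.1)).trans_lt hku.2)
  have h2 := discrepancy_take_add_one_le (by omega) hl
    ((hk'u (hl ▸ hk'v.1)).trans_lt hk'v.2)
  linarith [hu.discrepancy_take_sub_lt k k', hv.discrepancy_take_sub_lt k' k]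

lemma discrepancy_take_eq_of_aboveSet_eq (hu : IsCorridor α u) (hv : IsCorridor α v)
    (hl : u.length = v.length) (h : aboveSet α u = aboveSet α v) {k : ℕ} (hk : k ≤ u.length) :
    discrepancy α (u.take k) = discrepancy α (v.take k) := by
  rcases Nat.eq_zero_or_pos k with rfl | hk0
  · simp
  have hside : 0 < discrepancy α (u.take k) ↔ 0 < discrepancy α (v.take k) := by
    have := congrArg (k ∈ ·) h
    simp only [aboveSet, Finset.mem_filter, Finset.mem_Icc, ← hl, hk, and_true, eq_iff_iff] at this
    exact and_congr_right_iff.mp this hk0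
  have hu1 := abs_lt.mp (hu.abs_discrepancy_take k)
  have hv1 := abs_lt.mp (hv.abs_discrepancy_take k)
  by_contra hne
  rcases lt_or_gt_of_ne hne with hlt | hgt
  · have := discrepancy_take_add_one_le hk hl hlt
    by_cases hpos : 0 < discrepancy α (v.take k)
    · linarith [hside.mpr hpos]
    · linarith [hside.not.mpr hpos]
  · have := discrepancy_take_add_one_le (hl ▸ hk) hl.symm hgt
    by_cases hpos : 0 < discrepancy α (u.take k)
    · linarith [hside.mp hpos]
    · linarith [hside.not.mp hpos]

end IsCorridor

theorem ncard_le_of_isCorridor {α : ℝ} {n : ℕ} {s : Set (List (Fin 2))}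
    (hs : ∀ w ∈ s, IsCorridor α w ∧ w.length = n) : s.ncard ≤ n + 1 := by
  have hinj : Set.InjOn (fun w => (aboveSet α w).card) s := by
    intro u hu v hv hcard
    obtain ⟨hu, hlu⟩ := hs u hu
    obtain ⟨hv, hlv⟩ := hs v hv
    have hl : u.length = v.length := hlu.trans hlv.symm
    have hset : aboveSet α u = aboveSet α v := by
      rcases hu.aboveSet_total hv hl with h | h
      · exact Finset.eq_of_subset_of_card_le h hcard.ge
      · exact (Finset.eq_of_subset_of_card_le h hcard.le).symm
    exact eq_of_discrepancy_take_eq α hl fun k hk =>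
      hu.discrepancy_take_eq_of_aboveSet_eq hv hl hset hk
  have hmaps : ∀ w ∈ s, (aboveSet α w).card ∈ (Finset.range (n + 1) : Set ℕ) := by
    intro w hw
    obtain ⟨-, rfl⟩ := hs w hw
    have := Finset.card_filter_le (Finset.Icc 1 w.length) fun k => 0 < discrepancy α (w.take k)
    rw [Nat.card_Icc] at this
    simp only [Finset.coe_range, Set.mem_Iio, aboveSet]
    omega
  simpa using Set.ncard_le_ncard_of_injOn _ hmaps hinj

theorem factor_of_isCorridor {x : ℕ → Fin 2} {α : ℝ}
    (hx : ∀ v, Factor x v → |discrepancy α v| < 1) (hap : ¬ EventuallyPeriodic x)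
    {u : List (Fin 2)} (hu : IsCorridor α u) : Factor x u := by
  rw [factor_iff_mem_factorSet]
  by_contra hnot
  have hle : (insert u (factorSet x u.length)).ncard ≤ u.length + 1 := by
    refine ncard_le_of_isCorridor (α := α) fun w hw => ?_
    rcases hw with rfl | ⟨i, rfl⟩
    · exact ⟨hu, rfl⟩
    · exact ⟨isCorridor_of_factor hx (factor_window x i _), by simp⟩
  rw [Set.ncard_insert_of_notMem hnot (factorSet_finite _)] at hle
  have := succ_le_ncard_factorSet hap u.length
  omega

theorem sturmian_abClosure_eq_orbitClosure_general (x : ℕ → Fin 2)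
    (hbal : BalancedWord x)
    (hap : ¬ EventuallyPeriodic x) :
    ∀ y, InAbClosure x y ↔ ∀ u, Factor y u → Factor x u := by
  obtain ⟨α, hα⟩ := exists_slope hbal
  have hx : ∀ v, Factor x v → |discrepancy α v| < 1 := fun _ => abs_discrepancy_lt_one hbal hα hap
  intro y
  refine ⟨fun hy u hu => ?_, fun h u hu => ⟨u, h u hu, fun _ => rfl⟩⟩
  have hy' : ∀ v, Factor y v → |discrepancy α v| < 1 := by
    intro v hv
    obtain ⟨w, hw, hvw⟩ := hy v hv
    rw [discrepancy_perm α (List.perm_iff_count.mpr hvw)]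
    exact hx w hw
  exact factor_of_isCorridor hx hap (isCorridor_of_factor hy' hu)

theorem sturmian_abClosure_eq_orbitClosure (x : ℕ → Fin 2)
    (hbal : BalancedWord x) (hur : UniformlyRecurrent x)
    (hap : ¬ EventuallyPeriodic x) :
    ∀ y, InAbClosure x y ↔ ∀ u, Factor y u → Factor x u :=
  sturmian_abClosure_eq_orbitClosure_general x hbal hap
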